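/- For every integer m ≥ 2, the matrix U_m has an eigenvalue λ satisfying 0 < λ < 5^{−m/3}. -/

import Mathlib

/-
`U m = Mᴴ M` for the upper bidiagonal `M` with `1` on the diagonal and `2` above it; since
`det M = 1`, `U m` is positive definite. The vector `v i = (-1/2)^i` is annihilated by every row
of `M` but the last, so `vᵀ U v = 4^{-(m-1)}` while `vᵀ v ≥ 1`. As `4^{-(m-1)} ≤ 2^{-m} < 5^{-m/3}`
for `m ≥ 2`, the Rayleigh quotient of `v` lies below `5^{-m/3}`, which forces an eigenvalue
there; it is positive because `U m` is positive definite.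
-/

/-- `U m` is the `m × m` real symmetric matrix with `(U m) 0 0 = 1`,
diagonal entries `5` elsewhere, entries `2` on the sub- and super-diagonal,
and `0` otherwise. -/
def U (m : ℕ) : Matrix (Fin m) (Fin m) ℝ := fun i j =>
  if i = j then (if (i : ℕ) = 0 then 1 else 5)
  else if (i : ℕ) + 1 = (j : ℕ) ∨ (j : ℕ) + 1 = (i : ℕ) then 2 else 0

open scoped Matrix

theorem Fin.sum_ite_val_eq {M : Type*} [AddCommMonoid M] {m : ℕ} (f : Fin m → M) (a : ℕ) :
    ∑ k : Fin m, (if (k : ℕ) = a then f k else 0) = if h : a < m then f ⟨a, h⟩ else 0 := by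
  split_ifs with h
  · convert Finset.sum_ite_eq' Finset.univ (⟨a, h⟩ : Fin m) f using 2 <;> simp [Fin.ext_iff]
  · exact Finset.sum_eq_zero fun k _ => if_neg (by omega)

namespace Matrix

variable {n : Type*} [Fintype n] {A : Matrix n n ℝ}

theorem IsHermitian.exists_mulVec_eq_smul_lt_of_dotProduct_mulVec_lt [DecidableEq n]
    (hA : A.IsHermitian) {v : n → ℝ} {c : ℝ} (hv : v ⬝ᵥ (A *ᵥ v) < c * (v ⬝ᵥ v)) :
    ∃ (lam : ℝ) (w : n → ℝ), w ≠ 0 ∧ A *ᵥ w = lam • w ∧ lam < c := by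
  set B := A - c • (1 : Matrix n n ℝ)
  have hB : B.IsHermitian := hA.sub (by simp [IsHermitian])
  have hBv : star v ⬝ᵥ (B *ᵥ v) < 0 := by
    simp only [B, sub_mulVec, smul_mulVec, one_mulVec, dotProduct_sub, dotProduct_smul,
      smul_eq_mul, star_trivial]
    linarith
  obtain ⟨i, hi⟩ : ∃ i, hB.eigenvalues i < 0 := by
    by_contra! h
    exact hBv.not_ge ((hB.posSemidef_iff_eigenvalues_nonneg.mpr h).dotProduct_mulVec_nonneg v)
  have hw : ⇑(hB.eigenvectorBasis i) ≠ 0 :=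
    hB.eigenvectorBasis.orthonormal.ne_zero i ∘ (WithLp.ofLp_eq_zero 2).mp
  refine ⟨hB.eigenvalues i + c, _, hw, ?_, by linarith⟩
  rw [add_smul, ← hB.mulVec_eigenvectorBasis i]
  simp [B, sub_mulVec, smul_mulVec]

theorem PosDef.pos_of_mulVec_eq_smul (hA : A.PosDef) {lam : ℝ} {w : n → ℝ} (hw : w ≠ 0)
    (h : A *ᵥ w = lam • w) : 0 < lam := by
  have := hA.dotProduct_mulVec_pos hw
  rw [h, star_trivial, dotProduct_smul, smul_eq_mul] at this
  exact pos_of_mul_pos_left this (dotProduct_self_star_nonneg w)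

end Matrix

def UFactor (m : ℕ) : Matrix (Fin m) (Fin m) ℝ := fun i j =>
  if i = j then 1 else if (i : ℕ) + 1 = (j : ℕ) then 2 else 0

theorem det_UFactor (m : ℕ) : (UFactor m).det = 1 := by
  rw [Matrix.det_of_isUpperTriangular]
  · simp [UFactor]
  · intro i j (hij : (j : ℕ) < i)
    simp only [UFactor, Fin.ext_iff]
    split_ifs <;> first | omega | rfl

noncomputable def testVec (m : ℕ) : Fin m → ℝ := fun i => (-2⁻¹ : ℝ) ^ (i : ℕ)

theorem UFactor_mulVec_testVec (n : ℕ) :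
    UFactor (n + 1) *ᵥ testVec (n + 1) = Pi.single (Fin.last n) ((-2⁻¹ : ℝ) ^ n) := by
  funext i
  have hterm : ∀ j : Fin (n + 1), UFactor (n + 1) i j * testVec (n + 1) j =
      (if (j : ℕ) = i then testVec (n + 1) j else 0)
        + (if (j : ℕ) = i + 1 then 2 * testVec (n + 1) j else 0) := by
    intro j
    simp only [UFactor, Fin.ext_iff]
    split_ifs <;> first | omega | ring
  rw [Matrix.mulVec, dotProduct, Finset.sum_congr rfl fun j _ => hterm j, Finset.sum_add_distrib,
    Fin.sum_ite_val_eq, Fin.sum_ite_val_eq, dif_pos i.isLt]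
  by_cases hi : (i : ℕ) + 1 < n + 1
  · rw [dif_pos hi, Pi.single_eq_of_ne (by simp [Fin.ext_iff]; omega)]
    simp only [testVec, pow_succ]
    ring
  · obtain rfl : i = Fin.last n := by ext; simp; omega
    simp [testVec]

theorem U_eq_conjTranspose_mul_self (m : ℕ) : U m = (UFactor m)ᴴ * UFactor m := by
  ext i j
  have hterm : ∀ k : Fin m, (UFactor m)ᴴ i k * UFactor m k j =
      (if (k : ℕ) = i then UFactor m i j else 0)
        + (if (k : ℕ) = j then (if (j : ℕ) + 1 = i then 2 else 0) else 0)
        + (if (k : ℕ) = i - 1 then (if 1 ≤ (i : ℕ) ∧ i = j then 4 else 0) else 0) := by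
    intro k
    simp only [Matrix.conjTranspose_apply, star_trivial, UFactor, Fin.ext_iff]
    split_ifs <;> first | omega | norm_num
  rw [Matrix.mul_apply, Finset.sum_congr rfl fun k _ => hterm k, Finset.sum_add_distrib,
    Finset.sum_add_distrib, Fin.sum_ite_val_eq, Fin.sum_ite_val_eq, Fin.sum_ite_val_eq,
    dif_pos i.isLt, dif_pos j.isLt, dif_pos (by omega)]
  simp only [U, UFactor, Fin.ext_iff]
  split_ifs <;> first | omega | norm_num

theorem posDef_U (m : ℕ) : (U m).PosDef := by
  rw [U_eq_conjTranspose_mul_self]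
  refine Matrix.PosDef.conjTranspose_mul_self _ (Matrix.mulVec_injective_iff_isUnit.mpr ?_)
  simp [Matrix.isUnit_iff_isUnit_det, det_UFactor]

theorem dotProduct_U_mulVec_testVec (n : ℕ) :
    testVec (n + 1) ⬝ᵥ (U (n + 1) *ᵥ testVec (n + 1)) = 4⁻¹ ^ n := by
  rw [U_eq_conjTranspose_mul_self, ← Matrix.mulVec_mulVec, Matrix.dotProduct_mulVec,
    Matrix.vecMul_conjTranspose]
  simp only [star_trivial, UFactor_mulVec_testVec]
  simp [← mul_pow, -inv_pow]
  norm_num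

theorem one_le_dotProduct_self_testVec (n : ℕ) : 1 ≤ testVec (n + 1) ⬝ᵥ testVec (n + 1) := by
  calc (1 : ℝ) = testVec (n + 1) 0 * testVec (n + 1) 0 := by simp [testVec]
    _ ≤ ∑ i, testVec (n + 1) i * testVec (n + 1) i :=
      Finset.single_le_sum (fun i _ => mul_self_nonneg _) (Finset.mem_univ _)

theorem inv_four_pow_le_inv_two_pow_succ {n : ℕ} (hn : 1 ≤ n) :
    (4⁻¹ : ℝ) ^ n ≤ (2⁻¹ : ℝ) ^ (n + 1) := by
  rw [show (4⁻¹ : ℝ) = 2⁻¹ ^ 2 by norm_num, ← pow_mul]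
  exact pow_le_pow_of_le_one (by norm_num) (by norm_num) (by omega)

theorem two_rpow_neg_lt_five_rpow_neg_div_three {x : ℝ} (hx : 0 < x) :
    (2 : ℝ) ^ (-x) < 5 ^ (-x / 3) := by
  have h8 : (2 : ℝ) ^ (-x) = 8 ^ (-x / 3) := by
    rw [show (8 : ℝ) = 2 ^ (3 : ℝ) by norm_num, ← Real.rpow_mul (by norm_num)]
    ring_nf
  rw [h8]
  exact Real.rpow_lt_rpow_of_neg (by norm_num) (by norm_num) (by linarith)

theorem exists_eigenvalue_lt_rpow (m : ℕ) (hm : 2 ≤ m) :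
    ∃ (lam : ℝ) (v : Fin m → ℝ), v ≠ 0 ∧ (U m).mulVec v = lam • v ∧
      0 < lam ∧ lam < (5 : ℝ) ^ (-(m : ℝ) / 3) := by
  obtain ⟨n, rfl⟩ : ∃ n, m = n + 1 := ⟨m - 1, by omega⟩
  have hv : testVec (n + 1) ⬝ᵥ (U (n + 1) *ᵥ testVec (n + 1))
      < (5 : ℝ) ^ (-((n + 1 : ℕ) : ℝ) / 3) * (testVec (n + 1) ⬝ᵥ testVec (n + 1)) := by
    rw [dotProduct_U_mulVec_testVec]
    calc (4⁻¹ : ℝ) ^ n ≤ (2⁻¹ : ℝ) ^ (n + 1) := inv_four_pow_le_inv_two_pow_succ (by omega)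
      _ = (2 : ℝ) ^ (-((n + 1 : ℕ) : ℝ)) := by rw [Real.rpow_neg (by norm_num), inv_pow]; norm_cast
      _ < (5 : ℝ) ^ (-((n + 1 : ℕ) : ℝ) / 3) :=
        two_rpow_neg_lt_five_rpow_neg_div_three (by positivity)
      _ ≤ _ := le_mul_of_one_le_right (by positivity) (one_le_dotProduct_self_testVec n)
  obtain ⟨lam, w, hw, hUw, hlt⟩ :=
    (posDef_U _).isHermitian.exists_mulVec_eq_smul_lt_of_dotProduct_mulVec_lt hv
  exact ⟨lam, w, hw, hUw, (posDef_U _).pos_of_mulVec_eq_smul hw hUw, hlt⟩
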